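/- Let {Xⁿ} be a sequence of covers of a set S with X⁰ = {S}, Γ its tile graph, and x ∈ S. Choose tiles Xⁿ ∈ Xⁿ with x ∈ Xⁿ for each n ∈ ℕ₀ (a natural geodesic of x). Then: (1) the sequence {Xⁿ} is a geodesic ray in Γ, i.e., the graph distance satisfies |Xⁿ − X^k| = |n − k|; in particular (Xⁿ · X^k) = min{n,k} → ∞ as n,k → ∞, so {Xⁿ} converges at infinity; (2) if {Yⁿ} is another natural geodesic of the same point x, then (Xⁿ · Yⁿ) ≥ n − 1/2 for all n, so the two sequences are equivalent at infinity. -/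

import Mathlib

/-!
Levels change by at most one along an edge of the tile graph, so the level difference bounds
the graph distance from below; tiles of consecutive levels containing `x` intersect, so a
natural geodesic moves one level per edge and realises that bound. Two tiles of the same
level containing `x` are equal or adjacent, hence at distance at most one.
-/

open Set

variable {S : Type*}

def TileChain (T : Set (Set S)) (A B : Set S) (k : ℕ) : Prop :=
  ∃ c : ℕ → Set S, c 0 = A ∧ c k = B ∧ (∀ i, i ≤ k → c i ∈ T) ∧
    ∀ i, i < k → (c i ∩ c (i + 1)).Nonempty

def Uw (T : Set (Set S)) (w : ℕ) (A : Set S) : Set S :=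
  ⋃₀ {B | B ∈ T ∧ ∃ k, k ≤ w ∧ TileChain T A B k}

noncomputable def prox (X : ℕ → Set (Set S)) (w : ℕ) (x y : S) : ℕ∞ :=
  ⨆ n ∈ {n : ℕ | ∃ A ∈ X n, ∃ B ∈ X n, x ∈ A ∧ y ∈ B ∧
    (Uw (X n) w A ∩ Uw (X n) w B).Nonempty}, (n : ℕ∞)

noncomputable def proxSet (X : ℕ → Set (Set S)) (w : ℕ) (A B : Set S) : ℕ∞ :=
  ⨅ x ∈ A, ⨅ y ∈ B, prox X w x y

abbrev Tile (X : ℕ → Set (Set S)) : Type _ := {p : ℕ × Set S // p.2 ∈ X p.1}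

def tileGraph (X : ℕ → Set (Set S)) : SimpleGraph (Tile X) where
  Adj p q := p ≠ q ∧ (p.1.2 ∩ q.1.2).Nonempty ∧ p.1.1 ≤ q.1.1 + 1 ∧ q.1.1 ≤ p.1.1 + 1
  symm := by
    constructor
    rintro p q ⟨h1, h2, h3, h4⟩
    refine ⟨h1.symm, ?_, h4, h3⟩
    rwa [Set.inter_comm]
  loopless := by
    constructor
    rintro p ⟨h1, -⟩
    exact h1 rfl

noncomputable def gromovProd (X : ℕ → Set (Set S)) (p q : Tile X) : ℝ :=
  ((p.1.1 : ℝ) + (q.1.1 : ℝ) - ((tileGraph X).dist p q : ℝ)) / 2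

namespace SimpleGraph

variable {V : Type*} {G : SimpleGraph V}

lemma Walk.natDist_le_length {f : V → ℕ} (hf : ∀ u v, G.Adj u v → Nat.dist (f u) (f v) ≤ 1)
    {u v : V} (w : G.Walk u v) : Nat.dist (f u) (f v) ≤ w.length := by
  induction w with
  | nil => simp [Nat.dist_self]
  | @cons u v r huv w ih =>
    calc Nat.dist (f u) (f r) ≤ Nat.dist (f u) (f v) + Nat.dist (f v) (f r) :=
          Nat.dist.triangle_inequality _ _ _
      _ ≤ (cons huv w).length := by grind [hf u v huv, length_cons]

lemma exists_walk_length_eq_of_adj_succ {v : ℕ → V} (hv : ∀ n, G.Adj (v n) (v (n + 1)))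
    (n d : ℕ) : ∃ w : G.Walk (v n) (v (n + d)), w.length = d := by
  induction d with
  | zero => exact ⟨Walk.nil, rfl⟩
  | succ d ih =>
    obtain ⟨w, hw⟩ := ih
    exact ⟨w.concat (hv (n + d)), by simp [hw]⟩

lemma dist_eq_natDist_of_adj_succ {f : V → ℕ}
    (hf : ∀ u v, G.Adj u v → Nat.dist (f u) (f v) ≤ 1) {v : ℕ → V}
    (hv : ∀ n, G.Adj (v n) (v (n + 1))) (hfv : ∀ n, f (v n) = n) (n k : ℕ) :
    G.dist (v n) (v k) = Nat.dist n k := by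
  wlog hnk : n ≤ k generalizing n k
  · rw [dist_comm, Nat.dist_comm, this k n (by omega)]
  obtain ⟨d, rfl⟩ := Nat.exists_eq_add_of_le hnk
  obtain ⟨w, hw⟩ := exists_walk_length_eq_of_adj_succ hv n d
  obtain ⟨p, hp⟩ := (Walk.reachable w).exists_walk_length_eq_dist
  have hupper : G.dist (v n) (v (n + d)) ≤ d := (dist_le w).trans hw.le
  have hlower : Nat.dist n (n + d) ≤ G.dist (v n) (v (n + d)) := by
    simpa only [hfv, hp] using p.natDist_le_length hf
  simp only [Nat.dist_eq_sub_of_le hnk] at hlower ⊢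
  omega

end SimpleGraph

lemma Nat.cast_dist {R : Type*} [Ring R] [LinearOrder R] [IsStrictOrderedRing R] (n k : ℕ) :
    (Nat.dist n k : R) = max (n : R) k - min (n : R) k := by
  rw [Nat.dist_eq_max_sub_min, Nat.cast_sub (min_le_max), Nat.cast_max, Nat.cast_min]

variable {X : ℕ → Set (Set S)}

lemma tileGraph_natDist_le_one_of_adj {p q : Tile X} (h : (tileGraph X).Adj p q) :
    Nat.dist p.1.1 q.1.1 ≤ 1 := by
  obtain ⟨-, -, h₁, h₂⟩ := h
  unfold Nat.dist
  omega

lemma tileGraph_adj_of_level_succ {p q : Tile X} (hpq : (p.1.2 ∩ q.1.2).Nonempty)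
    (hlevel : q.1.1 = p.1.1 + 1) : (tileGraph X).Adj p q :=
  ⟨fun h => by simp [h] at hlevel, hpq, by omega, by omega⟩

lemma tileGraph_dist_le_one {p q : Tile X} (hpq : (p.1.2 ∩ q.1.2).Nonempty)
    (h₁ : p.1.1 ≤ q.1.1 + 1) (h₂ : q.1.1 ≤ p.1.1 + 1) : (tileGraph X).dist p q ≤ 1 := by
  by_cases heq : p = q
  · simp [heq]
  · have hadj : (tileGraph X).Adj p q := ⟨heq, hpq, h₁, h₂⟩
    exact (SimpleGraph.dist_eq_one_iff_adj.mpr hadj).le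

lemma gromovProd_eq_min {p q : Tile X}
    (h : (tileGraph X).dist p q = Nat.dist p.1.1 q.1.1) :
    gromovProd X p q = min (p.1.1 : ℝ) q.1.1 := by
  rw [gromovProd, h, Nat.cast_dist, ← min_add_max (p.1.1 : ℝ) q.1.1]
  ring

lemma sub_half_le_gromovProd {p q : Tile X} (h : (tileGraph X).dist p q ≤ 1)
    (hpq : p.1.1 = q.1.1) : (p.1.1 : ℝ) - 1 / 2 ≤ gromovProd X p q := by
  have h' : ((tileGraph X).dist p q : ℝ) ≤ 1 := by exact_mod_cast h
  rw [gromovProd, ← hpq]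
  linarith

theorem stmt15_general (S : Type*) (X : ℕ → Set (Set S))
    (x : S) (c : ℕ → Set S) (hc : ∀ n, c n ∈ X n) (hx : ∀ n, x ∈ c n) :
    (∀ n k : ℕ,
      (tileGraph X).dist ⟨(n, c n), hc n⟩ ⟨(k, c k), hc k⟩ = Nat.dist n k) ∧
    (∀ n k : ℕ,
      gromovProd X ⟨(n, c n), hc n⟩ ⟨(k, c k), hc k⟩ = min (n : ℝ) (k : ℝ)) ∧
    (∀ (c' : ℕ → Set S) (hc' : ∀ n, c' n ∈ X n), (∀ n, x ∈ c' n) →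
      ∀ n : ℕ, (n : ℝ) - 1 / 2 ≤ gromovProd X ⟨(n, c n), hc n⟩ ⟨(n, c' n), hc' n⟩) := by
  have hray : ∀ n k : ℕ,
      (tileGraph X).dist ⟨(n, c n), hc n⟩ ⟨(k, c k), hc k⟩ = Nat.dist n k := by
    refine SimpleGraph.dist_eq_natDist_of_adj_succ (f := fun p => p.1.1)
      (fun _ _ => tileGraph_natDist_le_one_of_adj)
      (fun n => tileGraph_adj_of_level_succ ⟨x, hx n, hx (n + 1)⟩ rfl) (fun _ => rfl)
  refine ⟨hray, fun n k => gromovProd_eq_min (hray n k), fun c' hc' hx' n => ?_⟩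
  exact sub_half_le_gromovProd
    (tileGraph_dist_le_one (p := ⟨(n, c n), hc n⟩) (q := ⟨(n, c' n), hc' n⟩)
      ⟨x, hx n, hx' n⟩ (Nat.le_succ n) (Nat.le_succ n)) rfl

/-- Natural geodesics: if `cⁿ ∈ Xⁿ` are tiles all containing a point `x`, then
(1) they form a geodesic ray in the tile graph (`|Xⁿ − X^k| = |n − k|`), so
`(Xⁿ · X^k) = min{n,k}` and the sequence converges at infinity; (2) for any other
natural geodesic `c'` of the same point `x`, `(Xⁿ · Yⁿ) ≥ n − 1/2` for all `n`, so the
two sequences are equivalent at infinity. -/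
theorem stmt15 (S : Type*) (X : ℕ → Set (Set S))
    (hcov : ∀ n, ⋃₀ X n = Set.univ) (hX0 : X 0 = {Set.univ})
    (x : S) (c : ℕ → Set S) (hc : ∀ n, c n ∈ X n) (hx : ∀ n, x ∈ c n) :
    (∀ n k : ℕ,
      (tileGraph X).dist ⟨(n, c n), hc n⟩ ⟨(k, c k), hc k⟩ = Nat.dist n k) ∧
    (∀ n k : ℕ,
      gromovProd X ⟨(n, c n), hc n⟩ ⟨(k, c k), hc k⟩ = min (n : ℝ) (k : ℝ)) ∧
    (∀ (c' : ℕ → Set S) (hc' : ∀ n, c' n ∈ X n), (∀ n, x ∈ c' n) →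
      ∀ n : ℕ, (n : ℝ) - 1 / 2 ≤ gromovProd X ⟨(n, c n), hc n⟩ ⟨(n, c' n), hc' n⟩) :=
  stmt15_general S X x c hc hx
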